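/- Let d, l, n, s be integers with d ≥ 1, l ≥ 1, d + l ≤ n, and 1 ≤ s ≤ ⌊(n−d−l)/(d+l+1)⌋, and set m = (n+1)s + n. Let 𝓘_{m,n,s+1} = { [A, f_{s+1}(A)] : A ⊆ [m], |A| = n }. If D is a subset of [m] with |D| = n + l that is not covered by any element of 𝓘_{m,n,s+1}, then no superset of D in [m] is covered by any element of 𝓘_{m,n,s+1}. -/

import Mathlib

/-- The point of the circular representation of `[N] = {1, …, N}` reached from the
point `x` after `t` clockwise steps. -/
def cpt (N x t : ℕ) : ℕ := (x - 1 + t) % N + 1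

/-- The block of `len` clockwise-consecutive points of the circular representation
of `[N]` starting at the point `x`. -/
def cblock (N x len : ℕ) : Finset ℕ := (Finset.range len).image (cpt N x)

/-- Data describing a candidate block structure on the circular representation of a
set `[N]`: the number `p` of blocks, the first (clockwise) element `b i` of the `i`-th
block `B i`, the length `lenB i` of `B i`, and the length `lenG i` of the gap `G i`
following `B i` clockwise (only the indices `i < p` are relevant). -/
structure CircData where
  p : ℕ
  b : ℕ → ℕ
  lenB : ℕ → ℕ
  lenG : ℕ → ℕ

/-- The `i`-th block `B i` of the data `S` on the circular representation of `[N]`. -/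
def CircData.Blk (S : CircData) (N i : ℕ) : Finset ℕ := cblock N (S.b i) (S.lenB i)

/-- The `i`-th gap `G i` of the data `S`, which follows the block `B i` clockwise. -/
def CircData.Gap (S : CircData) (N i : ℕ) : Finset ℕ :=
  cblock N (cpt N (S.b i) (S.lenB i)) (S.lenG i)

/-- `S` describes the block structure `B_1, G_1, B_2, G_2, …, B_p, G_p` of the set `A`
with respect to the density `δ` on the circular representation of `[N]`. -/
def IsBlockStructure (N : ℕ) (A : Finset ℕ) (δ : ℝ) (S : CircData) : Prop :=
  0 < S.p ∧
  -- each block is nonempty (it contains its first element `b i`)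
  (∀ i < S.p, 0 < S.lenB i) ∧
  -- the blocks and gaps are arranged consecutively clockwise, cyclically
  (∀ i, i + 1 < S.p → S.b (i + 1) = cpt N (S.b i) (S.lenB i + S.lenG i)) ∧
  S.b 0 = cpt N (S.b (S.p - 1)) (S.lenB (S.p - 1) + S.lenG (S.p - 1)) ∧
  -- the blocks and gaps form a partition of `[N]`
  ((Finset.range S.p).biUnion (fun i => S.Blk N i ∪ S.Gap N i) = Finset.Icc 1 N) ∧
  (∀ i < S.p, ∀ j < S.p, i ≠ j →
    Disjoint (S.Blk N i ∪ S.Gap N i) (S.Blk N j ∪ S.Gap N j)) ∧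
  (∀ i < S.p, Disjoint (S.Blk N i) (S.Gap N i)) ∧
  -- (i) the first (clockwise) element of each block belongs to `A`
  (∀ i < S.p, S.b i ∈ A) ∧
  -- (ii) the gaps are disjoint from `A`
  (∀ i < S.p, ∀ x ∈ S.Gap N i, x ∉ A) ∧
  -- (iii) `δ·|A ∩ B i| − 1 < |B i| ≤ δ·|A ∩ B i|`
  (∀ i < S.p, δ * ((A ∩ S.Blk N i).card : ℝ) - 1 < ((S.Blk N i).card : ℝ) ∧
    ((S.Blk N i).card : ℝ) ≤ δ * ((A ∩ S.Blk N i).card : ℝ)) ∧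
  -- (iv) every proper initial segment `[b i, y] ⊊ B i` satisfies
  -- `|[b i, y]| + 1 ≤ δ·|[b i, y] ∩ A|`
  (∀ i < S.p, ∀ t, 0 < t → t < S.lenB i →
    ((cblock N (S.b i) t).card : ℝ) + 1 ≤ δ * ((cblock N (S.b i) t ∩ A).card : ℝ))

/-- The union `𝒢_δ(A) = G_1 ∪ ⋯ ∪ G_p` of the gaps of the block structure `S`. -/
def CircData.gapsUnion (S : CircData) (N : ℕ) : Finset ℕ :=
  (Finset.range S.p).biUnion (S.Gap N)

/-- `f_δ(A) = A ∪ 𝒢_δ(A)`, computed from the block structure `S` of `A` on `[N]`. -/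
def fdelta (A : Finset ℕ) (S : CircData) (N : ℕ) : Finset ℕ := A ∪ S.gapsUnion N

/-!
Give an arc `J` of the circle the weight `(s+1)·|A ∩ J| - |J|`. A point lies in `𝒢_{s+1}(A)`
exactly when every arc ending at it has negative weight: read from the first block start, the
running weight is at a weak minimum at every block start and at a strict new minimum at every gap
point. This description does not refer to the block structure, and it depends only on how many
points of `A` each arc contains. A block structure exists whenever `(s+1)|A| < m`: then some point
has only negative arcs ending at it; start the walk at the next point of `A` after it and end each
block when the walk first returns to its value at the block start.

If `A ⊆ E ⊆ f_{s+1}(A)` and `D ⊆ E`, the points of `D \ A` are gap points of `A`. Replacing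
`A \ D` by a suitably matched subset `Y ⊆ D \ A` of the same size gives `A' = (A ∩ D) ∪ Y ⊆ D`
with `n` points such that every arc ending at a point of `D \ A'` meets `A'` in at most as many
points as it meets `A`. So `D \ A' ⊆ 𝒢_{s+1}(A')`, i.e. `[A', f_{s+1}(A')]` covers `D`.
-/

open Finset

section Circle

variable {N : ℕ}

theorem cpt_cpt (N x a b : ℕ) : cpt N (cpt N x a) b = cpt N x (a + b) := by
  simp only [cpt, Nat.add_sub_cancel, Nat.mod_add_mod, Nat.add_assoc]

theorem cpt_add_self (N x a : ℕ) : cpt N x (a + N) = cpt N x a := by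
  simp only [cpt, ← Nat.add_assoc, Nat.add_mod_right]

theorem cpt_self (N x : ℕ) : cpt N x N = cpt N x 0 := by
  simpa using cpt_add_self N x 0

theorem cpt_eq_cpt_iff {x a b : ℕ} : cpt N x a = cpt N x b ↔ a ≡ b [MOD N] :=
  ⟨fun h => Nat.ModEq.add_left_cancel' (x - 1) (Nat.succ_injective h),
    fun h => congrArg (· + 1) (Nat.ModEq.add_left (x - 1) h)⟩

theorem cpt_injOn (x : ℕ) : Set.InjOn (cpt N x) (Set.Iio N) := fun _ ha _ hb h =>
  Nat.ModEq.eq_of_lt_of_lt (cpt_eq_cpt_iff.mp h) ha hb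

theorem cpt_mem_Icc (hN : 0 < N) (x a : ℕ) : cpt N x a ∈ Icc 1 N := by
  have := Nat.mod_lt (x - 1 + a) hN
  simp only [cpt, mem_Icc]
  omega

theorem cpt_zero {x : ℕ} (hx : x ∈ Icc 1 N) : cpt N x 0 = x := by
  rw [mem_Icc] at hx
  simp only [cpt, Nat.add_zero, Nat.mod_eq_of_lt (show x - 1 < N by omega)]
  omega

theorem cpt_left_injective {x y : ℕ} (hx : x ∈ Icc 1 N) (hy : y ∈ Icc 1 N) (t : ℕ)
    (h : cpt N x t = cpt N y t) : x = y := by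
  have hxy : x - 1 ≡ y - 1 [MOD N] := Nat.ModEq.add_right_cancel' t (Nat.succ_injective h)
  rw [mem_Icc] at hx hy
  have := Nat.ModEq.eq_of_lt_of_lt hxy (by omega) (by omega)
  omega

theorem mem_cblock {x L y : ℕ} : y ∈ cblock N x L ↔ ∃ j < L, cpt N x j = y := by
  simp [cblock]

theorem cblock_cpt (N x a L : ℕ) : cblock N (cpt N x a) L = (Ico a (a + L)).image (cpt N x) := by
  ext y
  simp only [mem_cblock, mem_image, mem_Ico, cpt_cpt]
  constructor
  · rintro ⟨j, hj, rfl⟩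
    exact ⟨a + j, by omega, rfl⟩
  · rintro ⟨i, hi, rfl⟩
    exact ⟨i - a, by omega, by rw [Nat.add_sub_cancel' hi.1]⟩

theorem cblock_eq_image_Ico (N x L : ℕ) : cblock N x L = (Ico 0 L).image (cpt N x) := by
  rw [cblock, range_eq_Ico]

theorem cblock_one (N x : ℕ) : cblock N x 1 = {cpt N x 0} := by
  simp [cblock]

theorem cblock_cpt_zero (N x L : ℕ) : cblock N (cpt N x 0) L = cblock N x L := by
  rw [cblock_cpt, zero_add, cblock_eq_image_Ico]

theorem card_cblock {x L : ℕ} (hL : L ≤ N) : #(cblock N x L) = L := by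
  rw [cblock, card_image_of_injOn, card_range]
  exact (cpt_injOn x).mono fun j hj => by simp at hj ⊢; omega

theorem cblock_subset_Icc (hN : 0 < N) (x L : ℕ) : cblock N x L ⊆ Icc 1 N := by
  intro y hy
  obtain ⟨j, -, rfl⟩ := mem_cblock.mp hy
  exact cpt_mem_Icc hN x j

theorem cblock_self (N x : ℕ) : cblock N x N = Icc 1 N := by
  rcases Nat.eq_zero_or_pos N with rfl | hN
  · simp [cblock]
  · exact eq_of_subset_of_card_le (cblock_subset_Icc hN x N) (by simp [card_cblock le_rfl])

theorem cblock_of_le {x L : ℕ} (hN : 0 < N) (hL : N ≤ L) : cblock N x L = Icc 1 N :=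
  (cblock_subset_Icc hN x L).antisymm <|
    cblock_self N x ▸ image_subset_image (range_subset_range.mpr hL)

theorem exists_cpt_eq (x : ℕ) {y : ℕ} (hy : y ∈ Icc 1 N) : ∃ g < N, cpt N x g = y :=
  mem_cblock.mp (cblock_self N x ▸ hy)

theorem disjoint_image_cpt (x : ℕ) {I J : Finset ℕ} (hI : ∀ i ∈ I, i < N) (hJ : ∀ j ∈ J, j < N)
    (h : Disjoint I J) : Disjoint (I.image (cpt N x)) (J.image (cpt N x)) := by
  simp only [disjoint_left, mem_image, not_exists, not_and]
  rintro _ ⟨i, hi, rfl⟩ j hj hij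
  exact disjoint_left.mp h hi (cpt_injOn x (hJ j hj) (hI i hi) hij ▸ hj)

theorem cblock_add (N x a b : ℕ) :
    cblock N x (a + b) = cblock N x a ∪ cblock N (cpt N x a) b := by
  rw [cblock_cpt, cblock_eq_image_Ico, cblock_eq_image_Ico, ← image_union,
    Ico_union_Ico_eq_Ico (Nat.zero_le a) (Nat.le_add_right a b)]

theorem disjoint_cblock_cpt {x a b : ℕ} (hab : a + b ≤ N) :
    Disjoint (cblock N x a) (cblock N (cpt N x a) b) := by
  rw [cblock_cpt, cblock_eq_image_Ico]
  exact disjoint_image_cpt x (fun i hi => by simp at hi; omega) (fun i hi => by simp at hi; omega)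
    (Ico_disjoint_Ico_consecutive 0 a (a + b))

end Circle

section Walk

variable {N s : ℕ} {A : Finset ℕ} {x : ℕ}

/-- Conditions (iii) and (iv) for `δ = s + 1` say that a block has weight `0` and that its
proper nonempty initial segments have weight at least `1`. -/
def weight (s : ℕ) (A J : Finset ℕ) : ℤ := (s + 1) * #(A ∩ J) - #J

theorem weight_union {J K : Finset ℕ} (h : Disjoint J K) :
    weight s A (J ∪ K) = weight s A J + weight s A K := by
  have hA : Disjoint (A ∩ J) (A ∩ K) :=
    h.mono inter_subset_right inter_subset_right
  simp only [weight, inter_union_distrib_left, card_union_of_disjoint h,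
    card_union_of_disjoint hA]
  push_cast
  ring

theorem weight_singleton (y : ℕ) : weight s A {y} = if y ∈ A then (s : ℤ) else -1 := by
  by_cases hy : y ∈ A <;> simp [weight, hy]

theorem weight_le_weight {B J : Finset ℕ} (h : #(B ∩ J) ≤ #(A ∩ J)) :
    weight s B J ≤ weight s A J := by
  unfold weight
  gcongr

def walk (N s : ℕ) (A : Finset ℕ) (x t : ℕ) : ℤ := weight s A (cblock N x t)

theorem walk_zero : walk N s A x 0 = 0 := by
  simp [walk, weight, cblock]

theorem walk_self (hA : A ⊆ Icc 1 N) : walk N s A x N = (s + 1) * #A - N := by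
  simp [walk, weight, cblock_self, inter_eq_left.mpr hA]

theorem weight_cblock_cpt {a L : ℕ} (h : a + L ≤ N) :
    weight s A (cblock N (cpt N x a) L) = walk N s A x (a + L) - walk N s A x a := by
  rw [walk, walk, cblock_add, weight_union (disjoint_cblock_cpt h)]
  ring

theorem walk_succ {t : ℕ} (ht : t < N) :
    walk N s A x (t + 1) = walk N s A x t + if cpt N x t ∈ A then (s : ℤ) else -1 := by
  have h := weight_cblock_cpt (s := s) (A := A) (x := x) (show t + 1 ≤ N from ht)
  rw [cblock_cpt, Nat.Ico_succ_singleton, image_singleton, weight_singleton] at h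
  omega

theorem walk_add_of_notMem {a g : ℕ} (h : a + g ≤ N) (hg : ∀ r < g, cpt N x (a + r) ∉ A) :
    walk N s A x (a + g) = walk N s A x a - g := by
  induction g with
  | zero => simp
  | succ g ih =>
    rw [← Nat.add_assoc, walk_succ (by omega), if_neg (hg g (by omega)),
      ih (by omega) fun r hr => hg r (by omega)]
    push_cast
    ring

end Walk

section Deficit

variable {N s : ℕ} {A : Finset ℕ}

/-- Every arc ending at `z` has negative weight (the arc of length `L + 1` starting at `u` ends
at `cpt N u L`). By `mem_gapsUnion_iff` these are exactly the points of `𝒢_{s+1}(A)`. -/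
def IsDeficit (N s : ℕ) (A : Finset ℕ) (z : ℕ) : Prop :=
  ∀ u L, L < N → cpt N u L = z → weight s A (cblock N u (L + 1)) ≤ -1

theorem IsDeficit.of_card_le {z : ℕ} {B : Finset ℕ} (h : IsDeficit N s A z)
    (hB : ∀ u L, cpt N u L = z → #(B ∩ cblock N u (L + 1)) ≤ #(A ∩ cblock N u (L + 1))) :
    IsDeficit N s B z := fun u L hL hz =>
  (weight_le_weight (hB u L hz)).trans (h u L hL hz)

theorem isDeficit_of_walk {x g : ℕ} (hg : g < N)
    (hlin : ∀ a ≤ g, walk N s A x (g + 1) < walk N s A x a)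
    (hwrap : ∀ a, g < a → a < N → walk N s A x N + walk N s A x (g + 1) < walk N s A x a) :
    IsDeficit N s A (cpt N x g) := by
  intro u L hL hz
  obtain ⟨a, ha, hxa⟩ := exists_cpt_eq x (cpt_mem_Icc (N := N) (by omega) u 0)
  have hmod : a + L ≡ g [MOD N] := by
    rw [← cpt_eq_cpt_iff (x := x), ← cpt_cpt, hxa, cpt_cpt, zero_add, hz]
  rw [← cblock_cpt_zero, ← hxa]
  rcases Nat.lt_or_ge (a + L) N with h | h
  · have hag : a + L = g := Nat.ModEq.eq_of_lt_of_lt hmod h hg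
    rw [weight_cblock_cpt (by omega), ← Nat.add_assoc, hag]
    linarith [hlin a (by omega)]
  · have hag : a + L - N = g :=
      Nat.ModEq.eq_of_lt_of_lt ((Nat.modEq_sub_modulus_iff h).mpr hmod.symm).symm (by omega) hg
    have hsplit : L + 1 = (N - a) + (g + 1) := by omega
    have hwind : cpt N (cpt N x a) (N - a) = cpt N x 0 := by
      rw [cpt_cpt, Nat.add_sub_cancel' ha.le, cpt_self]
    rw [hsplit, cblock_add, weight_union (disjoint_cblock_cpt (by omega)), hwind,
      cblock_cpt_zero, weight_cblock_cpt (by omega), Nat.add_sub_cancel' ha.le, ← walk]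
    linarith [hwrap a (by omega) ha, walk_zero (N := N) (s := s) (A := A) (x := x)]

theorem IsDeficit.cpt_one {y : ℕ} (hy : y ∈ Icc 1 N) (h : IsDeficit N s A y)
    (hA : cpt N y 1 ∉ A) : IsDeficit N s A (cpt N y 1) := by
  intro u L hL hz
  cases L with
  | zero => simp_all [cblock_one, weight_singleton]
  | succ L =>
    have hu : cpt N u L = y :=
      cpt_left_injective (cpt_mem_Icc (by omega) u L) hy 1 (by rwa [cpt_cpt])
    rw [cblock_add, weight_union (disjoint_cblock_cpt (by omega)), cblock_one, cpt_cpt,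
      weight_singleton, hz, if_neg hA]
    linarith [h u L (by omega) hu]

theorem exists_isDeficit (hA : A ⊆ Icc 1 N) (hAN : (s + 1) * #A < N) :
    ∃ y ∈ Icc 1 N, IsDeficit N s A y := by
  set Q := walk N s A 1
  have hN : 0 < N := by omega
  have hQN : Q N < 0 := by
    have : ((s + 1) * #A : ℤ) < N := by exact_mod_cast hAN
    simp only [Q, walk_self hA]
    omega
  obtain ⟨τ₀, hτ₀, hmin⟩ := exists_min_image (Icc 1 N) Q ⟨N, by simp; omega⟩
  rw [mem_Icc] at hτ₀
  have hex : ∃ t, 1 ≤ t ∧ Q t ≤ Q τ₀ := ⟨τ₀, hτ₀.1, le_rfl⟩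
  obtain ⟨hτ1, hτmin⟩ := Nat.find_spec hex
  have hτN : Nat.find hex ≤ N := (Nat.find_min' hex ⟨hτ₀.1, le_rfl⟩).trans hτ₀.2
  -- the point just before the walk from `1` first reaches its minimum over `[1, N]`
  refine ⟨cpt N 1 (Nat.find hex - 1), cpt_mem_Icc hN _ _, isDeficit_of_walk (by omega) ?_ ?_⟩
  · intro a ha
    rw [Nat.sub_add_cancel hτ1]
    rcases Nat.eq_zero_or_pos a with rfl | ha0
    · linarith [hmin N (by simp; omega), walk_zero (N := N) (s := s) (A := A) (x := 1)]
    · have := Nat.find_min hex (show a < Nat.find hex by omega)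
      simp only [not_and, not_le] at this
      exact hτmin.trans_lt (this ha0)
  · intro a ha haN
    rw [Nat.sub_add_cancel hτ1]
    linarith [hmin a (by simp; omega)]

theorem exists_isDeficit_cpt_one_mem (hA : A ⊆ Icc 1 N) (hne : A.Nonempty)
    (hAN : (s + 1) * #A < N) : ∃ y ∈ Icc 1 N, IsDeficit N s A y ∧ cpt N y 1 ∈ A := by
  obtain ⟨y₀, hy₀, hdef⟩ := exists_isDeficit hA hAN
  have hN : 0 < N := by omega
  obtain ⟨a, ha⟩ := hne
  have hex : ∃ k, cpt N y₀ (k + 1) ∈ A := by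
    obtain ⟨j, -, hj⟩ := exists_cpt_eq (cpt N y₀ 1) (hA ha)
    rw [cpt_cpt, add_comm] at hj
    exact ⟨j, hj ▸ ha⟩
  have hreach : ∀ k ≤ Nat.find hex, IsDeficit N s A (cpt N y₀ k) := by
    intro k hk
    induction k with
    | zero => rwa [cpt_zero hy₀]
    | succ k ih =>
      rw [← cpt_cpt]
      exact (ih (by omega)).cpt_one (cpt_mem_Icc hN _ _)
        (by rw [cpt_cpt]; exact Nat.find_min hex (by omega))
  exact ⟨_, cpt_mem_Icc hN _ _, hreach _ le_rfl, by rw [cpt_cpt]; exact Nat.find_spec hex⟩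

theorem IsDeficit.walk_self_lt {y : ℕ} (hy : y ∈ Icc 1 N) (h : IsDeficit N s A y) {t : ℕ}
    (ht : t < N) : walk N s A (cpt N y 1) N < walk N s A (cpt N y 1) t := by
  have hend : cpt N (cpt N (cpt N y 1) t) (N - t - 1) = y := by
    rw [cpt_cpt, cpt_cpt, show 1 + (t + (N - t - 1)) = 0 + N by omega, cpt_add_self,
      cpt_zero hy]
  have := h _ _ (by omega) hend
  rw [show N - t - 1 + 1 = N - t by omega, weight_cblock_cpt (by omega),
    Nat.add_sub_cancel' ht.le] at this
  linarith

end Deficit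

section Decomposition

variable {N s : ℕ} {A : Finset ℕ} {x : ℕ}

/-- The offsets `[a, a + len)` from `x` form a block and `[a + len, b)` the gap following it. -/
structure IsChunk (N s : ℕ) (A : Finset ℕ) (x a len b : ℕ) : Prop where
  len_pos : 0 < len
  block_le : a + len ≤ b
  le_card : b ≤ N
  mem : cpt N x a ∈ A
  walk_block : walk N s A x (a + len) = walk N s A x a
  walk_lt : ∀ t, 0 < t → t < len → walk N s A x a < walk N s A x (a + t)
  notMem_gap : ∀ t, a + len ≤ t → t < b → cpt N x t ∉ A

structure IsWalkDecomp (N s : ℕ) (A : Finset ℕ) (x a p : ℕ) (c len : ℕ → ℕ) : Prop where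
  start : c 0 = a
  finish : c p = N
  chunk : ∀ i < p, IsChunk N s A x (c i) (len i) (c (i + 1))

namespace IsChunk

variable {a len b : ℕ} (hc : IsChunk N s A x a len b)
include hc

theorem walk_gap {r : ℕ} (hr : a + len + r ≤ b) :
    walk N s A x (a + len + r) = walk N s A x a - r := by
  rw [walk_add_of_notMem (hr.trans hc.le_card)
    fun t ht => hc.notMem_gap _ (by omega) (by omega), hc.walk_block]

theorem walk_ge {t : ℕ} (hat : a ≤ t) (ht : t ≤ a + len) :
    walk N s A x a ≤ walk N s A x t := by
  obtain ⟨t, rfl⟩ := Nat.exists_eq_add_of_le hat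
  rcases Nat.eq_zero_or_pos t with rfl | h0
  · simp
  rcases eq_or_lt_of_le ht with h | h
  · rw [h, hc.walk_block]
  · exact (hc.walk_lt t h0 (by omega)).le

theorem walk_le {t : ℕ} (hat : a ≤ t) (ht : t ≤ b) : walk N s A x b ≤ walk N s A x t := by
  have := hc.block_le
  have hb := hc.walk_gap (r := b - a - len) (by omega)
  rw [show a + len + (b - a - len) = b by omega] at hb
  rcases le_or_gt t (a + len) with h | h
  · linarith [hc.walk_ge hat h]
  · have := hc.walk_gap (r := t - a - len) (by omega)
    rw [show a + len + (t - a - len) = t by omega] at this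
    omega

theorem walk_succ_lt {g t : ℕ} (hg : a + len ≤ g) (hgb : g < b) (hat : a ≤ t) (htg : t ≤ g) :
    walk N s A x (g + 1) < walk N s A x t := by
  have hg1 := hc.walk_gap (r := g + 1 - a - len) (by omega)
  rw [show a + len + (g + 1 - a - len) = g + 1 by omega] at hg1
  rcases le_or_gt t (a + len) with h | h
  · have := hc.walk_ge hat h
    omega
  · have := hc.walk_gap (r := t - a - len) (by omega)
    rw [show a + len + (t - a - len) = t by omega] at this
    omega

theorem weight_block : weight s A (cblock N (cpt N x a) len) = 0 := by
  rw [weight_cblock_cpt (hc.block_le.trans hc.le_card), hc.walk_block, sub_self]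

theorem one_le_weight_prefix {t : ℕ} (ht0 : 0 < t) (ht : t < len) :
    1 ≤ weight s A (cblock N (cpt N x a) t) := by
  rw [weight_cblock_cpt (by have := hc.block_le; have := hc.le_card; omega)]
  linarith [hc.walk_lt t ht0 ht]

end IsChunk

theorem exists_isChunk (hmin : ∀ t < N, walk N s A x N < walk N s A x t) {a : ℕ} (ha : a < N)
    (haA : cpt N x a ∈ A) : ∃ len b, IsChunk N s A x a len b ∧ (b = N ∨ cpt N x b ∈ A) := by
  -- the block ends when the walk first returns to its starting value
  have hret : ∃ L, 0 < L ∧ walk N s A x (a + L) ≤ walk N s A x a :=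
    ⟨N - a, by omega, by rw [Nat.add_sub_cancel' ha.le]; exact (hmin a ha).le⟩
  obtain ⟨hL0, hLle⟩ := Nat.find_spec hret
  have hLN : Nat.find hret ≤ N - a :=
    Nat.find_min' hret ⟨by omega, by rw [Nat.add_sub_cancel' ha.le]; exact (hmin a ha).le⟩
  have hbefore : ∀ t, 0 < t → t < Nat.find hret →
      walk N s A x a < walk N s A x (a + t) := fun t h0 ht => by
    have := Nat.find_min hret ht
    simp only [not_and, not_le] at this
    exact this h0
  -- the walk goes down by at most one per step, so it returns exactly to its starting value
  have hLeq : walk N s A x (a + Nat.find hret) = walk N s A x a := by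
    obtain ⟨L, hL⟩ := Nat.exists_eq_add_of_lt hL0
    rw [hL, zero_add, ← Nat.add_assoc, walk_succ (by omega)] at hLle ⊢
    rcases Nat.eq_zero_or_pos L with rfl | hL1
    · rw [Nat.add_zero, if_pos haA] at hLle ⊢
      omega
    · have := hbefore L hL1 (by omega)
      split_ifs at hLle ⊢ <;> omega
  have hgap : ∃ g, a + Nat.find hret + g = N ∨ cpt N x (a + Nat.find hret + g) ∈ A :=
    ⟨N - a - Nat.find hret, Or.inl (by omega)⟩
  have hgN : Nat.find hgap ≤ N - a - Nat.find hret := Nat.find_min' hgap (Or.inl (by omega))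
  refine ⟨Nat.find hret, a + Nat.find hret + Nat.find hgap,
    ⟨hL0, by omega, by omega, haA, hLeq, hbefore, fun t ht htb => ?_⟩, Nat.find_spec hgap⟩
  have := Nat.find_min hgap (show t - a - Nat.find hret < Nat.find hgap by omega)
  rw [show a + Nat.find hret + (t - a - Nat.find hret) = t by omega] at this
  exact fun h => this (Or.inr h)

theorem exists_isWalkDecomp (hmin : ∀ t < N, walk N s A x N < walk N s A x t) {a : ℕ}
    (ha : a ≤ N) (haA : a = N ∨ cpt N x a ∈ A) : ∃ p c len, IsWalkDecomp N s A x a p c len := by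
  induction h : N - a using Nat.strong_induction_on generalizing a with
  | _ k ih =>
  rcases eq_or_lt_of_le ha with rfl | ha
  · exact ⟨0, fun _ => a, fun _ => 0, rfl, rfl, by simp⟩
  obtain ⟨len₀, b, hc, hb⟩ := exists_isChunk hmin ha (haA.resolve_left ha.ne)
  obtain ⟨p, c, len, hd⟩ := ih (N - b) (by have := hc.len_pos; have := hc.block_le; omega)
    hc.le_card hb rfl
  refine ⟨p + 1, fun i => match i with | 0 => a | i + 1 => c i,
    fun i => match i with | 0 => len₀ | i + 1 => len i, rfl, hd.finish, ?_⟩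
  rintro (_ | i) hi
  · simpa [hd.start] using hc
  · exact hd.chunk i (by omega)

namespace IsWalkDecomp

variable {a p : ℕ} {c len : ℕ → ℕ} (hd : IsWalkDecomp N s A x a p c len)
include hd

theorem mono {i j : ℕ} (hij : i ≤ j) (hj : j ≤ p) : c i ≤ c j := by
  induction j with
  | zero => rw [Nat.le_zero.mp hij]
  | succ j ih =>
    rcases eq_or_lt_of_le hij with rfl | h
    · exact le_rfl
    · have := (hd.chunk j (by omega)).len_pos
      have := (hd.chunk j (by omega)).block_le
      have := ih (by omega) (by omega)
      omega

theorem pos (ha : a < N) : 0 < p :=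
  Nat.pos_of_ne_zero fun h => by
    have := hd.finish
    rw [h, hd.start] at this
    omega

theorem lt_card {i t : ℕ} (hi : i < p) (ht : t < c (i + 1)) : t < N :=
  ht.trans_le (hd.finish ▸ hd.mono hi le_rfl)

theorem biUnion_Ico : (range p).biUnion (fun i => Ico (c i) (c (i + 1))) = Ico a N := by
  suffices h : ∀ q ≤ p, (range q).biUnion (fun i => Ico (c i) (c (i + 1))) = Ico (c 0) (c q) by
    rw [h p le_rfl, hd.start, hd.finish]
  intro q hq
  induction q with
  | zero => simp
  | succ q ih =>
    rw [range_add_one, biUnion_insert, ih (by omega), union_comm,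
      Ico_union_Ico_eq_Ico (hd.mono (Nat.zero_le q) (by omega)) (hd.mono (Nat.le_succ q) hq)]

theorem disjoint_Ico {i j : ℕ} (hi : i < p) (hj : j < p) (hij : i ≠ j) :
    Disjoint (Ico (c i) (c (i + 1))) (Ico (c j) (c (j + 1))) := by
  rw [disjoint_left]
  intro t h₁ h₂
  simp only [mem_Ico] at h₁ h₂
  rcases Nat.lt_or_gt_of_ne hij with h | h
  · have := hd.mono (show i + 1 ≤ j by omega) hj.le
    omega
  · have := hd.mono (show j + 1 ≤ i by omega) hi.le
    omega

theorem walk_le {i : ℕ} (hi : i ≤ p) {t : ℕ} (hat : a ≤ t) (ht : t ≤ c i) :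
    walk N s A x (c i) ≤ walk N s A x t := by
  induction i generalizing t with
  | zero => rw [hd.start] at ht ⊢; rw [le_antisymm ht hat]
  | succ i ih =>
    have hc := hd.chunk i (by omega)
    rcases le_or_gt t (c i) with h | h
    · exact (hc.walk_le le_rfl (by have := hc.block_le; omega)).trans (ih (by omega) hat h)
    · exact hc.walk_le h.le ht

theorem exists_chunk {g : ℕ} (hag : a ≤ g) (hg : g < N) :
    ∃ i < p, c i ≤ g ∧ g < c (i + 1) := by
  have hp := hd.pos (hag.trans_lt hg)
  have hex : ∃ i, i < p ∧ g < c (i + 1) :=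
    ⟨p - 1, by omega, by rw [Nat.sub_add_cancel hp, hd.finish]; exact hg⟩
  obtain ⟨hi, hgi⟩ := Nat.find_spec hex
  refine ⟨Nat.find hex, hi, ?_, hgi⟩
  rcases Nat.eq_zero_or_pos (Nat.find hex) with h | h
  · rw [h, hd.start]; exact hag
  · have := Nat.find_min hex (show Nat.find hex - 1 < Nat.find hex by omega)
    rw [Nat.sub_add_cancel h] at this
    omega

end IsWalkDecomp

theorem IsWalkDecomp.isDeficit_iff {p : ℕ} {c len : ℕ → ℕ} (hd : IsWalkDecomp N s A x 0 p c len)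
    {g : ℕ} (hg : g < N) :
    IsDeficit N s A (cpt N x g) ↔ ∃ i < p, c i + len i ≤ g ∧ g < c (i + 1) := by
  constructor
  · intro hdef
    obtain ⟨i, hi, hig, hgi⟩ := hd.exists_chunk (Nat.zero_le g) hg
    by_contra hgap
    have hblock : g < c i + len i := by
      by_contra h
      exact hgap ⟨i, hi, by omega, hgi⟩
    have hc := hd.chunk i hi
    have := hdef (cpt N x (c i)) (g - c i) (by omega) (by rw [cpt_cpt, Nat.add_sub_cancel' hig])
    rw [weight_cblock_cpt (by have := hc.le_card; omega)] at this
    linarith [hc.walk_ge (t := c i + (g - c i + 1)) (by omega) (by omega)]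
  · rintro ⟨i, hi, hig, hgi⟩
    have hc := hd.chunk i hi
    have hlin : ∀ t ≤ g, walk N s A x (g + 1) < walk N s A x t := by
      intro t ht
      rcases le_or_gt (c i) t with h | h
      · exact hc.walk_succ_lt hig hgi h ht
      · exact (hc.walk_succ_lt hig hgi le_rfl (by omega)).trans_le
          (hd.walk_le hi.le (Nat.zero_le t) h.le)
    refine isDeficit_of_walk hg hlin fun t _ htN => ?_
    have hN := hd.walk_le le_rfl (Nat.zero_le t) (hd.finish ▸ htN.le)
    rw [hd.finish] at hN
    linarith [hlin 0 (Nat.zero_le g), walk_zero (N := N) (s := s) (A := A) (x := x)]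

end Decomposition

section BlockStructure

variable {N s : ℕ} {A : Finset ℕ}

theorem block_condition_iff {J : Finset ℕ} :
    ((s + 1 : ℝ) * #(A ∩ J) - 1 < #J ∧ (#J : ℝ) ≤ (s + 1) * #(A ∩ J)) ↔ weight s A J = 0 := by
  constructor
  · rintro ⟨h₁, h₂⟩
    have h₁' : ((s + 1) * #(A ∩ J) : ℤ) < #J + 1 := by
      exact_mod_cast (by linarith : (s + 1 : ℝ) * #(A ∩ J) < #J + 1)
    have h₂' : (#J : ℤ) ≤ (s + 1) * #(A ∩ J) := by exact_mod_cast h₂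
    unfold weight
    omega
  · intro h
    have : (#J : ℝ) = (s + 1) * #(A ∩ J) := by
      exact_mod_cast (by unfold weight at h; omega : (#J : ℤ) = (s + 1) * #(A ∩ J))
    constructor <;> linarith

theorem prefix_condition_iff {J : Finset ℕ} :
    (#J : ℝ) + 1 ≤ (s + 1) * #(J ∩ A) ↔ 1 ≤ weight s A J := by
  rw [inter_comm, weight, le_sub_iff_add_le, add_comm (1 : ℤ)]
  exact_mod_cast Iff.rfl

def CircData.offset (S : CircData) (i : ℕ) : ℕ := ∑ j ∈ range i, (S.lenB j + S.lenG j)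

theorem CircData.offset_succ (S : CircData) (i : ℕ) :
    S.offset (i + 1) = S.offset i + S.lenB i + S.lenG i := by
  simp [CircData.offset, sum_range_succ, Nat.add_assoc]

def CircData.ofOffsets (N x p : ℕ) (c len : ℕ → ℕ) : CircData :=
  ⟨p, fun i => cpt N x (c i), len, fun i => c (i + 1) - c i - len i⟩

theorem CircData.ofOffsets_Blk (N x p : ℕ) (c len : ℕ → ℕ) (i : ℕ) :
    (CircData.ofOffsets N x p c len).Blk N i = (Ico (c i) (c i + len i)).image (cpt N x) :=
  cblock_cpt N x (c i) (len i)

theorem CircData.ofOffsets_Gap (N x p : ℕ) {c len : ℕ → ℕ} {i : ℕ} (h : c i + len i ≤ c (i + 1)) :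
    (CircData.ofOffsets N x p c len).Gap N i = (Ico (c i + len i) (c (i + 1))).image (cpt N x) := by
  simp only [CircData.Gap, CircData.ofOffsets, cpt_cpt, cblock_cpt]
  congr 2
  omega

theorem IsWalkDecomp.blk_union_gap {x p : ℕ} {c len : ℕ → ℕ} {a : ℕ}
    (hd : IsWalkDecomp N s A x a p c len) {i : ℕ} (hi : i < p) :
    (CircData.ofOffsets N x p c len).Blk N i ∪ (CircData.ofOffsets N x p c len).Gap N i =
      (Ico (c i) (c (i + 1))).image (cpt N x) := by
  rw [CircData.ofOffsets_Blk, CircData.ofOffsets_Gap N x p (hd.chunk i hi).block_le,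
    ← image_union, Ico_union_Ico_eq_Ico (Nat.le_add_right _ _) (hd.chunk i hi).block_le]

theorem IsWalkDecomp.isBlockStructure {x p : ℕ} {c len : ℕ → ℕ} (hx : x ∈ Icc 1 N)
    (hd : IsWalkDecomp N s A x 0 p c len) :
    IsBlockStructure N A (s + 1) (CircData.ofOffsets N x p c len) := by
  set S := CircData.ofOffsets N x p c len
  have hGap := fun i (hi : i < p) => CircData.ofOffsets_Gap N x p (hd.chunk i hi).block_le
  have hIco : ∀ i < p, ∀ t ∈ Ico (c i) (c (i + 1)), t < N := fun i hi t ht =>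
    hd.lt_card hi (mem_Ico.mp ht).2
  have hp0 : 0 < p := hd.pos (by simp only [mem_Icc] at hx; omega)
  have hp : S.p = p := rfl
  have hb : ∀ i, S.b i = cpt N x (c i) := fun _ => rfl
  have hlenB : ∀ i, S.lenB i = len i := fun _ => rfl
  have hlenG : ∀ i, S.lenG i = c (i + 1) - c i - len i := fun _ => rfl
  unfold IsBlockStructure
  simp only [hp, hb, hlenB, hlenG]
  refine ⟨hp0, fun i hi => (hd.chunk i hi).len_pos, fun i hi => ?_, ?_, ?_,
    fun i hi j hj hij => ?_, fun i hi => ?_, fun i hi => (hd.chunk i hi).mem,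
    fun i hi z hz => ?_, fun i hi => block_condition_iff.mpr (hd.chunk i hi).weight_block,
    fun i hi t ht0 htl => prefix_condition_iff.mpr ((hd.chunk i hi).one_le_weight_prefix ht0 htl)⟩
  · have := (hd.chunk i (by omega)).block_le
    rw [cpt_cpt]
    congr 1
    omega
  · have := (hd.chunk (p - 1) (by omega)).block_le
    rw [Nat.sub_add_cancel hp0, hd.finish] at this
    rw [cpt_cpt, hd.start, Nat.sub_add_cancel hp0, hd.finish,
      show c (p - 1) + (len (p - 1) + (N - c (p - 1) - len (p - 1))) = N by omega, cpt_self]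
  · rw [biUnion_congr rfl fun i hi => hd.blk_union_gap (mem_range.mp hi), ← biUnion_image,
      hd.biUnion_Ico, ← cblock_eq_image_Ico, cblock_self]
  · rw [hd.blk_union_gap hi, hd.blk_union_gap hj]
    exact disjoint_image_cpt x (hIco i hi) (hIco j hj) (hd.disjoint_Ico hi hj hij)
  · rw [CircData.ofOffsets_Blk, hGap i hi]
    exact disjoint_image_cpt x
      (fun t ht => hIco i hi t (Ico_subset_Ico_right (hd.chunk i hi).block_le ht))
      (fun t ht => hIco i hi t (Ico_subset_Ico_left (Nat.le_add_right _ _) ht))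
      (Ico_disjoint_Ico_consecutive _ _ _)
  · rw [hGap i hi] at hz
    obtain ⟨t, ht, rfl⟩ := mem_image.mp hz
    exact (hd.chunk i hi).notMem_gap t (mem_Ico.mp ht).1 (mem_Ico.mp ht).2

end BlockStructure

theorem IsBlockStructure.nonempty {N : ℕ} {A : Finset ℕ} {δ : ℝ} {S : CircData}
    (hS : IsBlockStructure N A δ S) : A.Nonempty := by
  obtain ⟨hp, -, -, -, -, -, -, hbA, -, -, -⟩ := hS
  exact ⟨S.b 0, hbA 0 hp⟩

namespace IsBlockStructure

variable {N s : ℕ} {A : Finset ℕ} {S : CircData}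
  (hA : A ⊆ Icc 1 N) (hAN : (s + 1) * #A < N) (hS : IsBlockStructure N A (s + 1) S)
include hA hS

theorem lenG_le {i : ℕ} (hi : i < S.p) : S.lenG i ≤ N := by
  obtain ⟨-, -, -, -, -, -, -, hbA, hgA, -, -⟩ := hS
  by_contra h
  have := mem_Icc.mp (hA (hbA i hi))
  refine hgA i hi (S.b i) ?_ (hbA i hi)
  rw [CircData.Gap, cblock_of_le (by omega) (by omega)]
  exact hA (hbA i hi)

theorem b_eq_cpt {i : ℕ} (hi : i < S.p) : S.b i = cpt N (S.b 0) (S.offset i) := by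
  obtain ⟨-, -, hcons, -, -, -, -, hbA, -, -, -⟩ := hS
  induction i with
  | zero => simp [CircData.offset, cpt_zero (hA (hbA 0 hi))]
  | succ i ih => rw [hcons i hi, ih (by omega), cpt_cpt, CircData.offset_succ, Nat.add_assoc]

theorem gap_eq_image {i : ℕ} (hi : i < S.p) :
    S.Gap N i = (Ico (S.offset i + S.lenB i) (S.offset (i + 1))).image (cpt N (S.b 0)) := by
  rw [CircData.Gap, hS.b_eq_cpt hA hi, cpt_cpt, cblock_cpt, CircData.offset_succ]

include hAN

theorem lenB_le {i : ℕ} (hi : i < S.p) : S.lenB i ≤ N := by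
  obtain ⟨-, -, -, -, -, -, -, -, -, -, hiv⟩ := hS
  by_contra h
  have := prefix_condition_iff.mp (hiv i hi N (by omega) (by omega))
  rw [← walk, walk_self hA] at this
  have : ((s + 1) * #A : ℤ) < N := by exact_mod_cast hAN
  omega

theorem offset_p_eq : S.offset S.p = N := by
  have hB := fun i (hi : i < S.p) => hS.lenB_le hA hAN hi
  have hG := fun i (hi : i < S.p) => hS.lenG_le hA hi
  obtain ⟨-, -, -, -, hpart, hdisj, hbg, -, -, -, -⟩ := hS
  have hcard := congrArg card hpart
  rw [card_biUnion fun i hi j hj hij => hdisj i (mem_range.mp hi) j (mem_range.mp hj) hij,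
    Nat.card_Icc, Nat.add_sub_cancel] at hcard
  rw [← hcard, CircData.offset]
  refine sum_congr rfl fun i hi => ?_
  rw [mem_range] at hi
  rw [card_union_of_disjoint (hbg i hi), CircData.Blk, CircData.Gap,
    card_cblock (hB i hi), card_cblock (hG i hi)]

theorem offset_succ_le {i : ℕ} (hi : i < S.p) : S.offset (i + 1) ≤ N :=
  hS.offset_p_eq hA hAN ▸ sum_le_sum_of_subset (range_subset_range.mpr hi)

theorem isWalkDecomp : IsWalkDecomp N s A (S.b 0) 0 S.p S.offset S.lenB := by
  refine ⟨by simp [CircData.offset], hS.offset_p_eq hA hAN, fun i hi => ?_⟩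
  have hle := hS.offset_succ_le hA hAN hi
  have hsucc := S.offset_succ i
  have hb := hS.b_eq_cpt hA hi
  have hgap := hS.gap_eq_image hA hi
  obtain ⟨-, hlenB, -, -, -, -, -, hbA, hgA, hiii, hiv⟩ := hS
  refine ⟨hlenB i hi, by omega, hle, hb ▸ hbA i hi, ?_, fun t ht0 htl => ?_, fun t ht htb => ?_⟩
  · have := block_condition_iff.mp (hiii i hi)
    rw [CircData.Blk, hb, weight_cblock_cpt (by omega)] at this
    linarith
  · have := prefix_condition_iff.mp (hiv i hi t ht0 htl)
    rw [hb, weight_cblock_cpt (by omega)] at this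
    linarith
  · exact hgA i hi _ (hgap ▸ mem_image_of_mem _ (mem_Ico.mpr ⟨ht, htb⟩))

theorem mem_gapsUnion_iff {z : ℕ} : z ∈ S.gapsUnion N ↔ z ∈ Icc 1 N ∧ IsDeficit N s A z := by
  have hd := hS.isWalkDecomp hA hAN
  simp only [CircData.gapsUnion, mem_biUnion, mem_range]
  constructor
  · rintro ⟨i, hi, hz⟩
    rw [hS.gap_eq_image hA hi] at hz
    obtain ⟨g, hg, rfl⟩ := mem_image.mp hz
    rw [mem_Ico] at hg
    have hgN : g < N := hg.2.trans_le (hS.offset_succ_le hA hAN hi)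
    exact ⟨cpt_mem_Icc (by omega) _ _, (hd.isDeficit_iff hgN).mpr ⟨i, hi, hg⟩⟩
  · rintro ⟨hz, hdef⟩
    obtain ⟨g, hgN, rfl⟩ := exists_cpt_eq (S.b 0) hz
    obtain ⟨i, hi, hg⟩ := (hd.isDeficit_iff hgN).mp hdef
    exact ⟨i, hi, hS.gap_eq_image hA hi ▸ mem_image_of_mem _ (mem_Ico.mpr hg)⟩

end IsBlockStructure

theorem exists_isBlockStructure {N s : ℕ} {A : Finset ℕ} (hA : A ⊆ Icc 1 N) (hne : A.Nonempty)
    (hAN : (s + 1) * #A < N) : ∃ S, IsBlockStructure N A (s + 1) S := by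
  obtain ⟨y, hy, hdef, hyA⟩ := exists_isDeficit_cpt_one_mem hA hne hAN
  have hx := cpt_mem_Icc (N := N) (by omega) y 1
  obtain ⟨p, c, len, hd⟩ := exists_isWalkDecomp (fun t ht => hdef.walk_self_lt hy ht)
    (Nat.zero_le N) (Or.inr (by rwa [cpt_zero hx]))
  exact ⟨_, hd.isBlockStructure hx⟩

section Matching

theorem exists_adjacent {N : ℕ} {X W : Finset ℕ} (hX : X ⊆ Icc 1 N) (hXne : X.Nonempty)
    (hWne : W.Nonempty) :
    ∃ w ∈ W, ∃ x ∈ X, ∃ j, cpt N w j = x ∧ ∀ k, 0 < k → k < j → cpt N w k ∉ W := by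
  obtain ⟨x, hx⟩ := hXne
  obtain ⟨w, hw⟩ := hWne
  have hex : ∃ j, ∃ w ∈ W, cpt N w j ∈ X := by
    obtain ⟨j, -, hj⟩ := exists_cpt_eq w (hX hx)
    exact ⟨j, w, hw, hj ▸ hx⟩
  obtain ⟨w, hw, hwx⟩ := Nat.find_spec hex
  refine ⟨w, hw, _, hwx, Nat.find hex, rfl, fun k hk hkj hkW => ?_⟩
  refine Nat.find_min hex (show Nat.find hex - k < Nat.find hex by omega) ⟨_, hkW, ?_⟩
  rwa [cpt_cpt, Nat.add_sub_cancel' hkj.le]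

/-- Each point of `Y` is matched with a point of `X` that follows it clockwise with no point of
`W` in between, so an arc ending at a point of `W \ Y` contains the partner of each of its
points of `Y`. -/
theorem exists_subset_card_inter_cblock_le {N : ℕ} {X W : Finset ℕ} (hX : X ⊆ Icc 1 N)
    (hXW : #X ≤ #W) :
    ∃ Y ⊆ W, #Y = #X ∧ ∀ z ∈ W \ Y, ∀ u L, cpt N u L = z →
      #(Y ∩ cblock N u (L + 1)) ≤ #(X ∩ cblock N u (L + 1)) := by
  induction hk : #X generalizing X W with
  | zero => exact ⟨∅, empty_subset _, card_empty, by simp⟩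
  | succ k ih =>
    obtain ⟨w, hw, x, hx, j, hwx, hbetween⟩ :=
      exists_adjacent (W := W) hX (card_pos.mp (by omega)) (card_pos.mp (by omega))
    obtain ⟨Y, hYW, hYcard, hY⟩ :=
      ih (X := X.erase x) (W := W.erase w) ((erase_subset x X).trans hX)
        (by rw [card_erase_of_mem hx, card_erase_of_mem hw]; omega)
        (by rw [card_erase_of_mem hx]; omega)
    have hwY : w ∉ Y := fun h => notMem_erase w W (hYW h)
    refine ⟨insert w Y, insert_subset hw (hYW.trans (erase_subset w W)),
      by rw [card_insert_of_notMem hwY, hYcard], fun z hz u L hzL => ?_⟩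
    simp only [mem_sdiff, mem_insert, not_or] at hz
    have hIH := hY z (mem_sdiff.mpr ⟨mem_erase.mpr ⟨hz.2.1, hz.1⟩, hz.2.2⟩) u L hzL
    rw [erase_inter] at hIH
    by_cases hwJ : w ∈ cblock N u (L + 1)
    · obtain ⟨i, hi, rfl⟩ := mem_cblock.mp hwJ
      have hxJ : x ∈ cblock N u (L + 1) := by
        refine mem_cblock.mpr ⟨i + j, ?_, by rw [← cpt_cpt, hwx]⟩
        by_contra h
        have hz' : cpt N (cpt N u i) (L - i) = z := by
          rw [cpt_cpt, Nat.add_sub_cancel' (by omega), hzL]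
        rcases Nat.eq_zero_or_pos (L - i) with h0 | h0
        · exact hz.2.1 (by rw [← hz', h0, cpt_cpt, Nat.add_zero])
        · exact hbetween (L - i) h0 (by omega) (hz' ▸ hz.1)
      have hxXJ : x ∈ X ∩ cblock N u (L + 1) := mem_inter.mpr ⟨hx, hxJ⟩
      rw [card_erase_of_mem hxXJ] at hIH
      rw [insert_inter_of_mem hwJ, card_insert_of_notMem fun h => hwY (mem_inter.mp h).1]
      have := card_pos.mpr ⟨x, hxXJ⟩
      omega
    · rw [insert_inter_of_notMem hwJ]
      exact hIH.trans (card_le_card (erase_subset _ _))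

end Matching

theorem card_inter_union_le {A D Y J : Finset ℕ} (h : #(Y ∩ J) ≤ #((A \ D) ∩ J)) :
    #((A ∩ D ∪ Y) ∩ J) ≤ #(A ∩ J) := by
  have hsplit : #(A ∩ D ∩ J) + #((A \ D) ∩ J) = #(A ∩ J) := by
    rw [← card_inter_add_card_sdiff (A ∩ J) D, inter_right_comm, sdiff_inter_right_comm]
  calc #((A ∩ D ∪ Y) ∩ J) ≤ #(A ∩ D ∩ J) + #(Y ∩ J) := by
        rw [union_inter_distrib_right]
        exact card_union_le _ _
    _ ≤ #(A ∩ J) := by omega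

theorem exists_exchange_subset {N : ℕ} {A D : Finset ℕ} (hA : A ⊆ Icc 1 N) (hAD : #A ≤ #D) :
    ∃ A' ⊆ D, #A' = #A ∧ ∀ z ∈ D, z ∉ A' → z ∉ A ∧ ∀ u L, cpt N u L = z →
      #(A' ∩ cblock N u (L + 1)) ≤ #(A ∩ cblock N u (L + 1)) := by
  have hXW : #(A \ D) ≤ #(D \ A) := by
    have := card_sdiff_add_card_inter A D
    have := card_sdiff_add_card_inter D A
    rw [inter_comm] at this
    omega
  obtain ⟨Y, hYW, hYcard, hY⟩ := exists_subset_card_inter_cblock_le (sdiff_subset.trans hA) hXW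
  refine ⟨A ∩ D ∪ Y, union_subset inter_subset_right (hYW.trans sdiff_subset), ?_,
    fun z hz hzA' => ?_⟩
  · rw [card_union_of_disjoint ((disjoint_sdiff.mono_right hYW).mono_left inter_subset_left),
      hYcard, card_inter_add_card_sdiff]
  · have hzA : z ∉ A := fun h => hzA' (mem_union_left _ (mem_inter.mpr ⟨h, hz⟩))
    exact ⟨hzA, fun u L hzL => card_inter_union_le
      (hY z (mem_sdiff.mpr ⟨mem_sdiff.mpr ⟨hz, hzA⟩, fun h => hzA' (mem_union_right _ h)⟩) u L hzL)⟩

theorem not_covered_superset_on_m_general (l n s m : ℕ) (hs1 : 1 ≤ s)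
    (hm : m = (n + 1) * s + n)
    (D : Finset ℕ) (hD : D ⊆ Finset.Icc 1 m) (hDcard : D.card = n + l)
    (hnotcov : ∀ A : Finset ℕ, A ⊆ Finset.Icc 1 m → A.card = n →
      ∀ S : CircData, IsBlockStructure m A ((s : ℝ) + 1) S →
        ¬(A ⊆ D ∧ D ⊆ fdelta A S m)) :
    ∀ E : Finset ℕ, D ⊆ E → E ⊆ Finset.Icc 1 m →
      ∀ A : Finset ℕ, A ⊆ Finset.Icc 1 m → A.card = n →
        ∀ S : CircData, IsBlockStructure m A ((s : ℝ) + 1) S →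
          ¬(A ⊆ E ∧ E ⊆ fdelta A S m) := by
  intro E hDE _ A hA hAcard S hS ⟨_, hEf⟩
  have hAN : ∀ B : Finset ℕ, #B = n → (s + 1) * #B < m := fun B hB => by
    rw [hB, hm, show (n + 1) * s + n = (s + 1) * n + s by ring]
    omega
  obtain ⟨A', hA'D, hA'card, hA'⟩ := exists_exchange_subset hA (by omega : #A ≤ #D)
  have hA'I := hA'D.trans hD
  have hne : A'.Nonempty := card_pos.mp (hA'card ▸ card_pos.mpr hS.nonempty)
  rw [hAcard] at hA'card
  obtain ⟨S', hS'⟩ := exists_isBlockStructure hA'I hne (hAN A' hA'card)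
  refine hnotcov A' hA'I hA'card S' hS' ⟨hA'D, fun z hz => ?_⟩
  by_cases hzA' : z ∈ A'
  · exact mem_union_left _ hzA'
  obtain ⟨hzA, hcard⟩ := hA' z hz hzA'
  have hzS : z ∈ S.gapsUnion m := (mem_union.mp (hEf (hDE hz))).resolve_left hzA
  obtain ⟨hzI, hdef⟩ := (hS.mem_gapsUnion_iff hA (hAN A hAcard)).mp hzS
  exact mem_union_right _
    ((hS'.mem_gapsUnion_iff hA'I (hAN A' hA'card)).mpr ⟨hzI, hdef.of_card_le hcard⟩)

/-- Corollary 3.2 of the paper, covering part. Let `d ≥ 1`, `l ≥ 1`,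
`d + l ≤ n`, `1 ≤ s ≤ ⌊(n−d−l)/(d+l+1)⌋`, `m = (n+1)s + n` and
`𝓘_{m,n,s+1} = {[A, f_{s+1}(A)] : A ⊆ [m], |A| = n}`. If `D ⊆ [m]` with `|D| = n + l`
is not covered by any element of `𝓘_{m,n,s+1}`, then no superset of `D` in `[m]` is
covered by an element of `𝓘_{m,n,s+1}`. -/
theorem not_covered_superset_on_m (d l n s m : ℕ) (hd : 1 ≤ d) (hl : 1 ≤ l)
    (hdl : d + l ≤ n) (hs1 : 1 ≤ s) (hs2 : s ≤ (n - d - l) / (d + l + 1))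
    (hm : m = (n + 1) * s + n)
    (D : Finset ℕ) (hD : D ⊆ Finset.Icc 1 m) (hDcard : D.card = n + l)
    (hnotcov : ∀ A : Finset ℕ, A ⊆ Finset.Icc 1 m → A.card = n →
      ∀ S : CircData, IsBlockStructure m A ((s : ℝ) + 1) S →
        ¬(A ⊆ D ∧ D ⊆ fdelta A S m)) :
    ∀ E : Finset ℕ, D ⊆ E → E ⊆ Finset.Icc 1 m →
      ∀ A : Finset ℕ, A ⊆ Finset.Icc 1 m → A.card = n →
        ∀ S : CircData, IsBlockStructure m A ((s : ℝ) + 1) S →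
          ¬(A ⊆ E ∧ E ⊆ fdelta A S m) :=
  not_covered_superset_on_m_general l n s m hs1 hm D hD hDcard hnotcov
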